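/- Let α > 0 and let h : ℝ → ℝ be twice continuously differentiable with h(x) ≥ α for all x, and assume h′ has compact support. Then ∫_ℝ h′′(x)² dx = ∫_ℝ (h′′(x) − h′(x)²/(2h(x)))² dx + (1/12)·∫_ℝ h′(x)⁴/h(x)² dx. In particular ‖h′′‖²_{L²(ℝ)} ≤ ‖h′′ − h′²/(2h)‖²_{L²(ℝ)} + (1/12)·∫_ℝ h′⁴/h² dx. -/

import Mathlib

/-!
Since `h′` has compact support and `h` stays away from `0`, the function `h′³/h` has compact
support, so its derivative `3 h″ h′²/h − h′⁴/h²` integrates to zero, i.e.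
`∫ h″ h′²/h = (1/3) ∫ h′⁴/h²`. Expanding `(h″ − h′²/(2h))² = h″² − h″ h′²/h + (1/4) h′⁴/h²`
and integrating gives the identity, because `1/3 − 1/4 = 1/12`.
-/

open MeasureTheory

theorem Continuous.integrable_of_eq_zero_of_hasCompactSupport {X E F : Type*}
    [TopologicalSpace X] [MeasurableSpace X] [OpensMeasurableSpace X] {μ : Measure X}
    [IsFiniteMeasureOnCompacts μ] [Zero E] [NormedAddCommGroup F] {f : X → E} {g : X → F}
    (hg : Continuous g) (hf : HasCompactSupport f) (hfg : ∀ x, f x = 0 → g x = 0) :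
    Integrable g μ :=
  hg.integrable_of_hasCompactSupport <| hf.mono fun x hgx hfx => hgx (hfg x hfx)

theorem HasDerivAt.pow_three_div {u v : ℝ → ℝ} {u' v' x : ℝ} (hu : HasDerivAt u u' x)
    (hv : HasDerivAt v v' x) (hvx : v x ≠ 0) :
    HasDerivAt (fun y => u y ^ 3 / v y) (3 * u' * u x ^ 2 / v x - u x ^ 3 * v' / v x ^ 2) x := by
  refine ((hu.fun_pow 3).fun_div hv hvx).congr_deriv ?_
  field_simp
  ring

section

variable {h : ℝ → ℝ}

theorem integrable_sq_deriv_deriv (hh : ContDiff ℝ 2 h) (hsupp : HasCompactSupport (deriv h)) :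
    Integrable fun x => deriv (deriv h) x ^ 2 :=
  ((hh.deriv'.continuous_deriv le_rfl).pow 2).integrable_of_eq_zero_of_hasCompactSupport
    hsupp.deriv fun x hx => by simp [hx]

theorem integrable_deriv_deriv_mul_sq_div (hh : ContDiff ℝ 2 h) (hne : ∀ x, h x ≠ 0)
    (hsupp : HasCompactSupport (deriv h)) :
    Integrable fun x => deriv (deriv h) x * deriv h x ^ 2 / h x :=
  (((hh.deriv'.continuous_deriv le_rfl).mul (hh.continuous_deriv one_le_two |>.pow 2)).div
    hh.continuous hne).integrable_of_eq_zero_of_hasCompactSupport hsupp fun x hx => by simp [hx]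

theorem integrable_deriv_pow_div_pow (hh : ContDiff ℝ 1 h) (hne : ∀ x, h x ≠ 0)
    (hsupp : HasCompactSupport (deriv h)) {m : ℕ} (hm : m ≠ 0) (k : ℕ) :
    Integrable fun x => deriv h x ^ m / h x ^ k :=
  (((hh.continuous_deriv le_rfl).pow m).div (hh.continuous.pow k) fun x => pow_ne_zero k (hne x)
    ).integrable_of_eq_zero_of_hasCompactSupport hsupp fun x hx => by simp [hx, hm]

theorem integral_deriv_deriv_mul_sq_div (hh : ContDiff ℝ 2 h) (hne : ∀ x, h x ≠ 0)
    (hsupp : HasCompactSupport (deriv h)) :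
    ∫ x, deriv (deriv h) x * deriv h x ^ 2 / h x = (1 / 3) * ∫ x, deriv h x ^ 4 / h x ^ 2 := by
  have hcube : ∀ x, HasDerivAt (fun y => deriv h y ^ 3 / h y)
      (3 * (deriv (deriv h) x * deriv h x ^ 2 / h x) - deriv h x ^ 4 / h x ^ 2) x := by
    intro x
    refine ((hh.deriv'.differentiable one_ne_zero x).hasDerivAt.pow_three_div
      (hh.differentiable two_ne_zero x).hasDerivAt (hne x)).congr_deriv ?_
    ring
  have hint_mixed := (integrable_deriv_deriv_mul_sq_div hh hne hsupp).const_mul 3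
  have hint_quartic := integrable_deriv_pow_div_pow (hh.of_le one_le_two) hne hsupp four_ne_zero 2
  have hzero := integral_eq_zero_of_hasDerivAt_of_integrable hcube (hint_mixed.sub hint_quartic)
    (by simpa using integrable_deriv_pow_div_pow (hh.of_le one_le_two) hne hsupp three_ne_zero 1)
  rw [integral_sub hint_mixed hint_quartic, integral_const_mul] at hzero
  linarith

theorem integral_sq_deriv_deriv_eq (hh : ContDiff ℝ 2 h) (hne : ∀ x, h x ≠ 0)
    (hsupp : HasCompactSupport (deriv h)) :
    ∫ x, deriv (deriv h) x ^ 2 =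
      (∫ x, (deriv (deriv h) x - deriv h x ^ 2 / (2 * h x)) ^ 2)
        + (1 / 12) * ∫ x, deriv h x ^ 4 / h x ^ 2 := by
  have hexpand : ∀ x, (deriv (deriv h) x - deriv h x ^ 2 / (2 * h x)) ^ 2 =
      deriv (deriv h) x ^ 2 - deriv (deriv h) x * deriv h x ^ 2 / h x
        + (1 / 4) * (deriv h x ^ 4 / h x ^ 2) := by
    intro x
    field_simp [hne x]
    ring
  have hint_square := integrable_sq_deriv_deriv hh hsupp
  have hint_mixed := integrable_deriv_deriv_mul_sq_div hh hne hsupp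
  have hint_quartic := integrable_deriv_pow_div_pow (hh.of_le one_le_two) hne hsupp four_ne_zero 2
  simp_rw [hexpand]
  rw [integral_add (f := fun x => _ - _) (hint_square.sub hint_mixed) (hint_quartic.const_mul _),
    integral_sub hint_square hint_mixed, integral_const_mul,
    integral_deriv_deriv_mul_sq_div hh hne hsupp]
  ring

end

/-- If `h` is C² with `h ≥ α > 0` and `h′` has compact support, then
`∫ h″² = ∫ (h″ − h′²/(2h))² + (1/12) ∫ h′⁴/h²`; in particular
`‖h″‖²_{L²} ≤ ‖h″ − h′²/(2h)‖²_{L²} + (1/12) ∫ h′⁴/h²`. -/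
theorem stmt_15 (α : ℝ) (hα : 0 < α) (h : ℝ → ℝ)
    (hh : ContDiff ℝ 2 h) (hge : ∀ x, α ≤ h x)
    (hsupp : HasCompactSupport (deriv h)) :
    (∫ x, (deriv (deriv h) x) ^ 2 =
        (∫ x, (deriv (deriv h) x - (deriv h x) ^ 2 / (2 * h x)) ^ 2)
          + (1 / 12) * ∫ x, (deriv h x) ^ 4 / (h x) ^ 2) ∧
    (∫ x, (deriv (deriv h) x) ^ 2 ≤
        (∫ x, (deriv (deriv h) x - (deriv h x) ^ 2 / (2 * h x)) ^ 2)
          + (1 / 12) * ∫ x, (deriv h x) ^ 4 / (h x) ^ 2) := by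
  have hne : ∀ x, h x ≠ 0 := fun x => (hα.trans_le (hge x)).ne'
  have hid := integral_sq_deriv_deriv_eq hh hne hsupp
  exact ⟨hid, hid.le⟩
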